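/- Let n be a finite index type and N a natural number. For i = 1,…,N let a_i > 0 and b_i be real numbers and X_i, Z_i real n×n matrices (viewed as complex matrices). Define Ψ_Y(iω) = Σ_{i=1}^{N} ((iω + a_i)·X_i + b_i·Z_i) / ((iω + a_i)² + b_i²) and Y(iω) = Ψ_Y(iω) + Ψ_Y(iω)ᴴ. Assume that Y(iω) is positive semidefinite for every real ω. Then there exists a function g : ℝ → ℝ that is antitone on [0, ∞) and Lebesgue integrable on [0, ∞), such that for every real ω the matrix g(|ω|)·I − Y(iω) is positive semidefinite. -/

import Mathlib

open Matrix ComplexOrder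

/-!
A positive semidefinite matrix is dominated by its trace times the identity (its eigenvalues are
nonnegative and sum to the trace), so it suffices to bound `tr Y(iω) = 2 Re tr Ψ_Y(iω)` by
`C / (1 + ω²)`. Each summand of `tr Ψ_Y(iω)` has the form `((iω + a) x + b z) / ((iω + a)² + b²)`
with `x, z` real. Its leading part `x / (iω)` is purely imaginary, so its real part has a numerator
of order `1 + ω²`, while the denominator `|a + i(ω + b)|² |a + i(ω - b)|²` is at least a positive
multiple of `(1 + ω²)²`.
-/

open scoped MatrixOrder in
theorem Matrix.PosSemidef.posSemidef_smul_one_sub {n 𝕜 : Type*} [RCLike 𝕜] [Fintype n]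
    [DecidableEq n] {A : Matrix n n 𝕜} (hA : A.PosSemidef) {c : ℝ}
    (hc : RCLike.re A.trace ≤ c) : ((c : 𝕜) • 1 - A).PosSemidef := by
  have hle : A ≤ algebraMap ℝ _ c := by
    refine le_algebraMap_of_spectrum_le (fun x hx => ?_) hA.isHermitian.isSelfAdjoint
    obtain ⟨i, rfl⟩ := hA.isHermitian.spectrum_real_eq_range_eigenvalues ▸ hx
    refine le_trans ?_ hc
    rw [hA.isHermitian.trace_eq_sum_eigenvalues, ← RCLike.ofReal_sum, RCLike.ofReal_re]
    exact Finset.single_le_sum (fun j _ => hA.eigenvalues_nonneg j) (Finset.mem_univ i)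
  rwa [le_iff, Algebra.algebraMap_eq_smul_one, RCLike.real_smul_eq_coe_smul (K := 𝕜)] at hle

lemma Matrix.re_trace_add_conjTranspose {n : Type*} [Fintype n] (A : Matrix n n ℂ) :
    (A + Aᴴ).trace.re = 2 * A.trace.re := by
  rw [trace_add, trace_conjTranspose, Complex.add_re, Complex.star_def, Complex.conj_re]
  ring

lemma Matrix.trace_map_ofReal {n : Type*} [Fintype n] (A : Matrix n n ℝ) :
    (A.map Complex.ofReal).trace = A.trace :=
  (AddMonoidHom.map_trace Complex.ofRealHom A).symm

lemma add_mul_le_abs_add_abs_mul_one_add (c₀ c₁ : ℝ) {t : ℝ} (ht : 0 ≤ t) :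
    c₀ + c₁ * t ≤ (|c₀| + |c₁|) * (1 + t) := by
  nlinarith [le_abs_self c₀, abs_nonneg c₁, mul_nonneg (abs_nonneg c₀) ht,
    mul_le_mul_of_nonneg_right (le_abs_self c₁) ht]

lemma sq_mul_one_add_sq_le (a t ω : ℝ) :
    a ^ 2 * (1 + ω ^ 2) ≤ (1 + 2 * a ^ 2 + 2 * t ^ 2) * (a ^ 2 + (ω - t) ^ 2) := by
  nlinarith [sq_nonneg (ω - 2 * t), sq_nonneg (ω - t), sq_nonneg (t * (ω - t)), sq_nonneg (a ^ 2)]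

namespace Complex

lemma normSq_sq_add_sq (a b ω : ℝ) :
    normSq ((I * ω + a) ^ 2 + (b : ℂ) ^ 2) = (a ^ 2 + (ω + b) ^ 2) * (a ^ 2 + (ω - b) ^ 2) := by
  have h : (I * ω + a) ^ 2 + (b : ℂ) ^ 2 =
      (a + ((ω + b : ℝ) : ℂ) * I) * (a + ((ω - b : ℝ) : ℂ) * I) := by
    push_cast
    linear_combination (b : ℂ) ^ 2 * I_sq
  rw [h, normSq_mul, normSq_add_mul_I, normSq_add_mul_I]

lemma re_inv_sq_add_sq_mul (a b x z ω : ℝ) :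
    (((I * ω + a) ^ 2 + (b : ℂ) ^ 2)⁻¹ * ((I * ω + a) * x + b * z)).re =
      ((a * x + b * z) * (a ^ 2 + b ^ 2) + (a * x - b * z) * ω ^ 2) /
        normSq ((I * ω + a) ^ 2 + (b : ℂ) ^ 2) := by
  simp only [pow_two, mul_re, inv_re, add_re, I_re, ofReal_re, zero_mul, I_im, ofReal_im,
    mul_zero, sub_self, zero_add, add_im, mul_im, one_mul, add_zero, sub_zero, inv_im, neg_add_rev]
  ring

lemma pow_four_mul_one_add_sq_sq_le (a b ω : ℝ) :
    a ^ 4 * (1 + ω ^ 2) ^ 2 ≤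
      (1 + 2 * a ^ 2 + 2 * b ^ 2) ^ 2 * normSq ((I * ω + a) ^ 2 + (b : ℂ) ^ 2) := by
  have hplus := sq_mul_one_add_sq_le a (-b) ω
  have hminus := sq_mul_one_add_sq_le a b ω
  rw [sub_neg_eq_add, neg_sq] at hplus
  rw [normSq_sq_add_sq]
  calc a ^ 4 * (1 + ω ^ 2) ^ 2 = (a ^ 2 * (1 + ω ^ 2)) * (a ^ 2 * (1 + ω ^ 2)) := by ring
    _ ≤ _ := mul_le_mul hplus hminus (by positivity) (by positivity)
    _ = _ := by ring

lemma exists_re_inv_sq_add_sq_mul_le {a : ℝ} (ha : 0 < a) (b x z : ℝ) :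
    ∃ C, 0 ≤ C ∧ ∀ ω : ℝ,
      (((I * ω + a) ^ 2 + (b : ℂ) ^ 2)⁻¹ * ((I * ω + a) * x + b * z)).re ≤
        C * (1 + ω ^ 2)⁻¹ := by
  set M := 1 + 2 * a ^ 2 + 2 * b ^ 2
  set K := |(a * x + b * z) * (a ^ 2 + b ^ 2)| + |a * x - b * z|
  have hK : 0 ≤ K := by positivity
  refine ⟨K * M ^ 2 / a ^ 4, by positivity, fun ω => ?_⟩
  set D := normSq ((I * ω + a) ^ 2 + (b : ℂ) ^ 2)
  have hD := pow_four_mul_one_add_sq_sq_le a b ω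
  have hD0 : 0 < D := by
    have : 0 < a ^ 4 * (1 + ω ^ 2) ^ 2 := by positivity
    nlinarith
  have hnum := add_mul_le_abs_add_abs_mul_one_add
    ((a * x + b * z) * (a ^ 2 + b ^ 2)) (a * x - b * z) (sq_nonneg ω)
  rw [re_inv_sq_add_sq_mul, div_le_iff₀ hD0,
    show K * M ^ 2 / a ^ 4 * (1 + ω ^ 2)⁻¹ * D = K * M ^ 2 * D / (a ^ 4 * (1 + ω ^ 2)) by
      field_simp, le_div_iff₀ (by positivity)]
  calc _ ≤ K * (1 + ω ^ 2) * (a ^ 4 * (1 + ω ^ 2)) :=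
        mul_le_mul_of_nonneg_right hnum (by positivity)
    _ = K * (a ^ 4 * (1 + ω ^ 2) ^ 2) := by ring
    _ ≤ K * (M ^ 2 * D) := mul_le_mul_of_nonneg_left hD hK
    _ = _ := by ring

end Complex

lemma antitoneOn_mul_inv_one_add_sq {C : ℝ} (hC : 0 ≤ C) :
    AntitoneOn (fun t : ℝ => C * (1 + t ^ 2)⁻¹) (Set.Ici 0) := by
  intro x hx y _ hxy
  dsimp only
  gcongr

theorem Y_bounded_by_integrable_antitone_envelope
    {n : Type*} [Fintype n] [DecidableEq n] (N : ℕ)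
    (a b : Fin N → ℝ) (ha : ∀ i, 0 < a i)
    (X Z : Fin N → Matrix n n ℝ)
    (ΨY : ℝ → Matrix n n ℂ)
    (hΨY : ∀ ω : ℝ, ΨY ω = ∑ i : Fin N,
        ((Complex.I * ω + a i) ^ 2 + (b i : ℂ) ^ 2)⁻¹ •
          ((Complex.I * ω + a i) • (X i).map Complex.ofReal +
            (b i : ℂ) • (Z i).map Complex.ofReal))
    (Y : ℝ → Matrix n n ℂ)
    (hY : ∀ ω : ℝ, Y ω = ΨY ω + (ΨY ω)ᴴ)
    (hpsd : ∀ ω : ℝ, (Y ω).PosSemidef) :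
    ∃ g : ℝ → ℝ, AntitoneOn g (Set.Ici 0) ∧
      MeasureTheory.IntegrableOn g (Set.Ici 0) ∧
      ∀ ω : ℝ, (((g |ω| : ℝ) : ℂ) • (1 : Matrix n n ℂ) - Y ω).PosSemidef := by
  have htrace : ∀ ω : ℝ, (ΨY ω).trace = ∑ i, ((Complex.I * ω + a i) ^ 2 + (b i : ℂ) ^ 2)⁻¹ *
      ((Complex.I * ω + a i) * (X i).trace + b i * (Z i).trace) := fun ω => by
    simp only [hΨY, trace_sum, trace_smul, trace_add, trace_map_ofReal, smul_eq_mul]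
  choose C hC0 hC using fun i =>
    Complex.exists_re_inv_sq_add_sq_mul_le (ha i) (b i) (X i).trace (Z i).trace
  have hC0' : 0 ≤ 2 * ∑ i, C i := mul_nonneg zero_le_two (Finset.sum_nonneg fun i _ => hC0 i)
  refine ⟨fun t => (2 * ∑ i, C i) * (1 + t ^ 2)⁻¹, antitoneOn_mul_inv_one_add_sq hC0',
    (integrable_inv_one_add_sq.const_mul _).integrableOn, fun ω => ?_⟩
  refine (hpsd ω).posSemidef_smul_one_sub ?_
  rw [RCLike.re_to_complex, hY, re_trace_add_conjTranspose, htrace, Complex.re_sum, sq_abs]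
  show _ ≤ (2 * ∑ i, C i) * (1 + ω ^ 2)⁻¹
  rw [mul_assoc, Finset.sum_mul]
  gcongr with i
  exact hC i ω
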